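/- (Zlotnik's lemma) Let y, h ∈ W^{1,1}(0,T) and g ∈ C(ℝ) satisfy y'(t) = g(y(t)) + h'(t) a.e. on [0,T] with y(0) = y₀. Suppose g(ζ) → −∞ as ζ → ∞ and there exist N₀ ≥ 0, N₁ ≥ 0 with h(t₂) − h(t₁) ≤ N₀ + N₁(t₂ − t₁) for all 0 ≤ t₁ < t₂ ≤ T. If ζ̄ is a constant such that g(ζ) ≤ −N₁ for all ζ ≥ ζ̄, then y(t) ≤ max{y₀, ζ̄} + N₀ for all t ∈ [0,T]. -/

import Mathlib

/-!
Let `M = max y₀ ζ̄` and suppose `y t > M`. Going back from `t` to the last time `σ` at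
which `y σ ≤ M`, the trajectory stays above `ζ̄` on `(σ, t]`, so there `g (y) ≤ -N₁` and
the drift `∫ g (y)` over `[σ, t]` is at most `-N₁ (t - σ)`. This exactly cancels the linear
part of the bound on `h t - h σ`, leaving `y t - y σ ≤ N₀`.
-/

open MeasureTheory Set

section Primitive

variable {f F : ℝ → ℝ} {a b : ℝ}

theorem continuousOn_of_eq_add_integral (hf : IntervalIntegrable f volume a b)
    (hF : ∀ t ∈ Icc a b, F t = F a + ∫ s in a..t, f s) : ContinuousOn F (Icc a b) := by
  rcases le_or_gt a b with hab | hba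
  · have hprim := intervalIntegral.continuousOn_primitive_interval' hf left_mem_uIcc
    rw [uIcc_of_le hab] at hprim
    exact (continuousOn_const.add hprim).congr hF
  · simp [Icc_eq_empty_of_lt hba]

theorem sub_eq_integral_of_eq_add_integral (hf : IntervalIntegrable f volume a b)
    (hF : ∀ t ∈ Icc a b, F t = F a + ∫ s in a..t, f s) {s t : ℝ} (hs : s ∈ Icc a b)
    (ht : t ∈ Icc a b) : F t - F s = ∫ u in s..t, f u := by
  have hmono : ∀ c ∈ Icc a b, IntervalIntegrable f volume a c := fun c hc => by
    have hab := hc.1.trans hc.2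
    refine hf.mono_set ?_
    rw [uIcc_of_le hab]
    exact uIcc_subset_Icc (left_mem_Icc.2 hab) hc
  rw [hF t ht, hF s hs, add_sub_add_left_eq_sub]
  exact intervalIntegral.integral_interval_sub_left (hmono t ht) (hmono s hs)

end Primitive

theorem exists_last_le_of_continuousOn {y : ℝ → ℝ} {a t M : ℝ} (hat : a ≤ t)
    (hy : ContinuousOn y (Icc a t)) (ha : y a ≤ M) (ht : M < y t) :
    ∃ σ ∈ Ico a t, y σ ≤ M ∧ ∀ s ∈ Ioc σ t, M < y s := by
  set S := Icc a t ∩ y ⁻¹' Iic M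
  have haS : a ∈ S := ⟨left_mem_Icc.2 hat, ha⟩
  have hbdd : BddAbove S := ⟨t, fun s hs => hs.1.2⟩
  have hσS : sSup S ∈ S :=
    (hy.preimage_isClosed_of_isClosed isClosed_Icc isClosed_Iic).csSup_mem ⟨a, haS⟩ hbdd
  refine ⟨sSup S, ⟨hσS.1.1, hσS.1.2.lt_of_ne ?_⟩, hσS.2, fun s hs => ?_⟩
  · rintro hσt
    exact (hσt ▸ hσS.2 : y t ≤ M).not_gt ht
  · by_contra! hle
    exact (le_csSup hbdd ⟨⟨hσS.1.1.trans hs.1.le, hs.2⟩, hle⟩).not_gt hs.1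

theorem stmt4_general (T : ℝ) (g : ℝ → ℝ) (y h h' : ℝ → ℝ)
    (y0 N0 N1 zbar : ℝ)
    (hN0 : 0 ≤ N0)
    (hy0 : y 0 = y0)
    (hyint : IntervalIntegrable (fun s => g (y s) + h' s) volume 0 T)
    (hyFTC : ∀ t ∈ Set.Icc (0 : ℝ) T, y t = y 0 + ∫ s in (0 : ℝ)..t, (g (y s) + h' s))
    (hh'int : IntervalIntegrable h' volume 0 T)
    (hhFTC : ∀ t ∈ Set.Icc (0 : ℝ) T, h t = h 0 + ∫ s in (0 : ℝ)..t, h' s)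
    (hinc : ∀ t1 t2 : ℝ, 0 ≤ t1 → t1 < t2 → t2 ≤ T → h t2 - h t1 ≤ N0 + N1 * (t2 - t1))
    (hzbar : ∀ ζ : ℝ, zbar ≤ ζ → g ζ ≤ -N1) :
    ∀ t ∈ Set.Icc (0 : ℝ) T, y t ≤ max y0 zbar + N0 := by
  intro t ht
  rcases le_or_gt (y t) (max y0 zbar) with hle | hlt
  · linarith
  obtain ⟨σ, hσ, hyσ, hy_gt⟩ := exists_last_le_of_continuousOn ht.1
    ((continuousOn_of_eq_add_integral hyint hyFTC).mono (Icc_subset_Icc_right ht.2))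
    (hy0 ▸ le_max_left y0 zbar) hlt
  have hσT : σ ∈ Icc 0 T := ⟨hσ.1, hσ.2.le.trans ht.2⟩
  have hsub : uIcc σ t ⊆ uIcc 0 T := by
    rw [uIcc_of_le (hσT.1.trans hσT.2)]; exact uIcc_subset_Icc hσT ht
  have hgy : IntervalIntegrable (fun s => g (y s)) volume σ t := by
    simpa using (hyint.sub hh'int).mono_set hsub
  have hdrift : ∫ s in σ..t, g (y s) ≤ -N1 * (t - σ) := by
    calc ∫ s in σ..t, g (y s) ≤ ∫ _ in σ..t, -N1 :=
          intervalIntegral.integral_mono_on_of_le_Ioo hσ.2.le hgy intervalIntegrable_const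
            fun s hs => hzbar _
              ((le_max_right y0 zbar).trans (hy_gt s (Ioo_subset_Ioc_self hs)).le)
      _ = -N1 * (t - σ) := by simp [mul_comm]
  have hincr : y t - y σ = (∫ s in σ..t, g (y s)) + (h t - h σ) := by
    rw [sub_eq_integral_of_eq_add_integral hyint hyFTC hσT ht,
      sub_eq_integral_of_eq_add_integral hh'int hhFTC hσT ht,
      intervalIntegral.integral_add hgy (hh'int.mono_set hsub)]
  linarith [hinc σ t hσ.1 hσ.2 ht.2]

/-- Zlotnik's lemma: if y' = g(y) + h' a.e. (in the W^{1,1} / integral sense),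
g(ζ) → −∞ as ζ → ∞, h has increments bounded by N₀ + N₁(t₂−t₁), and
g(ζ) ≤ −N₁ for ζ ≥ ζ̄, then y(t) ≤ max{y₀, ζ̄} + N₀ on [0,T]. -/
theorem stmt4 (T : ℝ) (hT : 0 < T) (g : ℝ → ℝ) (y h h' : ℝ → ℝ)
    (y0 N0 N1 zbar : ℝ)
    (hg : Continuous g)
    (hgtop : Filter.Tendsto g Filter.atTop Filter.atBot)
    (hN0 : 0 ≤ N0) (hN1 : 0 ≤ N1)
    (hy0 : y 0 = y0)
    (hyint : IntervalIntegrable (fun s => g (y s) + h' s) volume 0 T)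
    (hyFTC : ∀ t ∈ Set.Icc (0 : ℝ) T, y t = y 0 + ∫ s in (0 : ℝ)..t, (g (y s) + h' s))
    (hh'int : IntervalIntegrable h' volume 0 T)
    (hhFTC : ∀ t ∈ Set.Icc (0 : ℝ) T, h t = h 0 + ∫ s in (0 : ℝ)..t, h' s)
    (hinc : ∀ t1 t2 : ℝ, 0 ≤ t1 → t1 < t2 → t2 ≤ T → h t2 - h t1 ≤ N0 + N1 * (t2 - t1))
    (hzbar : ∀ ζ : ℝ, zbar ≤ ζ → g ζ ≤ -N1) :
    ∀ t ∈ Set.Icc (0 : ℝ) T, y t ≤ max y0 zbar + N0 :=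
  stmt4_general T g y h h' y0 N0 N1 zbar hN0 hy0 hyint hyFTC hh'int hhFTC hinc hzbar
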